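/- Let ρ be a positive semidefinite complex matrix indexed by (Fin 3 → Fin 2) with trace 1 (a three-qubit density matrix). Define z₁ = (⟨Z_A⟩ + ⟨Z_B⟩ + ⟨Z_C⟩)/3 with ⟨Z_A⟩ = Σ_x (−1)^{x(0)} ρ(x,x), ⟨Z_B⟩ = Σ_x (−1)^{x(1)} ρ(x,x), ⟨Z_C⟩ = Σ_x (−1)^{x(2)} ρ(x,x); define z₂ = (⟨Z_A Z_B⟩ + ⟨Z_A Z_C⟩ + ⟨Z_B Z_C⟩)/3 with ⟨Z_A Z_B⟩ = Σ_x (−1)^{x(0)+x(1)} ρ(x,x) and analogously for the other pairs; and define z₃ = Σ_x (−1)^{x(0)+x(1)+x(2)} ρ(x,x). Let |GHZ₃⟩ ∈ ℂ^(Fin 3 → Fin 2) be given by |GHZ₃⟩(x) = 1/√2 if x is constant and 0 otherwise. Then ⟨GHZ₃| ρ |GHZ₃⟩ ≤ (1/16)·( √(1 + 3z₁ + 3z₂ + z₃) + √(1 − 3z₁ + 3z₂ − z₃) )². -/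

import Mathlib

/-!
Only the components `|000⟩` and `|111⟩` of `|GHZ₃⟩` are nonzero, so the fidelity is
`(ρ₀₀ + ρ₁₁ + 2 Re ρ₀₁) / 2`, writing `0` and `1` for `000` and `111`. Since
`∏ᵢ (1 ± (-1)^{xᵢ})` vanishes unless `x = 000` (resp. `x = 111`), where it is `8`, the combinations
`1 ± 3z₁ + 3z₂ ± z₃` are `8ρ₀₀` and `8ρ₁₁`; and the nonnegative determinant of the principal
`2 × 2` minor on `{000, 111}` bounds `Re ρ₀₁` by `√ρ₀₀ √ρ₁₁`.
-/

open scoped BigOperators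
open Matrix ComplexOrder

/-- The three-qubit GHZ state: amplitude `1/√2` on constant functions, `0` elsewhere. -/
noncomputable def ghz3 : (Fin 3 → Fin 2) → ℂ :=
  fun x => if ∀ i j : Fin 3, x i = x j then ((1 / Real.sqrt 2 : ℝ) : ℂ) else 0

/-- The one-body Pauli-Z expectation `⟨Z_i⟩` of a three-qubit density matrix. -/
noncomputable def zExp (ρ : Matrix (Fin 3 → Fin 2) (Fin 3 → Fin 2) ℂ) (i : Fin 3) : ℝ :=
  ∑ x : Fin 3 → Fin 2, (-1 : ℝ) ^ ((x i : ℕ)) * (ρ x x).re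

/-- The two-body Pauli-Z correlation `⟨Z_i Z_j⟩` of a three-qubit density matrix. -/
noncomputable def zzExp (ρ : Matrix (Fin 3 → Fin 2) (Fin 3 → Fin 2) ℂ)
    (i j : Fin 3) : ℝ :=
  ∑ x : Fin 3 → Fin 2, (-1 : ℝ) ^ ((x i : ℕ) + (x j : ℕ)) * (ρ x x).re

/-- The three-body Pauli-Z correlation `⟨Z_A Z_B Z_C⟩` of a three-qubit density matrix. -/
noncomputable def zzzExp (ρ : Matrix (Fin 3 → Fin 2) (Fin 3 → Fin 2) ℂ) : ℝ :=
  ∑ x : Fin 3 → Fin 2, (-1 : ℝ) ^ ((x 0 : ℕ) + (x 1 : ℕ) + (x 2 : ℕ)) * (ρ x x).re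

namespace Matrix

theorem PosSemidef.norm_sq_apply_le {n 𝕜 : Type*} [RCLike 𝕜] {A : Matrix n n 𝕜}
    (hA : A.PosSemidef) (i j : n) :
    ‖A i j‖ ^ 2 ≤ RCLike.re (A i i) * RCLike.re (A j j) := by
  have hdet := (hA.submatrix ![i, j]).det_nonneg
  rw [det_fin_two] at hdet
  simp only [submatrix_apply, cons_val_zero, cons_val_one] at hdet
  rw [← hA.1.apply j i, ← hA.1.coe_re_apply_self i, ← hA.1.coe_re_apply_self j,
    mul_comm (A i j), RCLike.star_def, RCLike.conj_mul] at hdet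
  exact_mod_cast sub_nonneg.mp hdet

theorem PosSemidef.re_apply_le_sqrt_mul_sqrt {n 𝕜 : Type*} [RCLike 𝕜] {A : Matrix n n 𝕜}
    (hA : A.PosSemidef) (i j : n) :
    RCLike.re (A i j) ≤ √(RCLike.re (A i i)) * √(RCLike.re (A j j)) := by
  rw [← Real.sqrt_mul (RCLike.nonneg_iff.mp hA.diag_nonneg).1]
  exact (RCLike.re_le_norm _).trans (Real.le_sqrt_of_sq_le (hA.norm_sq_apply_le i j))

section

variable {n : Type*} [Fintype n]

theorem sum_re_apply_self_eq_one {A : Matrix n n ℂ} (h : A.trace = 1) :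
    ∑ i, (A i i).re = 1 := by
  simpa [trace, Complex.re_sum] using congrArg Complex.re h

theorem IsHermitian.re_dotProduct_mulVec_single_add_single [DecidableEq n] {A : Matrix n n ℂ}
    (hA : A.IsHermitian) (i j : n) :
    (star (Pi.single i 1 + Pi.single j 1) ⬝ᵥ A *ᵥ (Pi.single i 1 + Pi.single j 1)).re =
      (A i i).re + (A j j).re + 2 * (A i j).re := by
  have hji : (A j i).re = (A i j).re := by rw [← hA.apply i j]; rfl
  simp only [star_add, Pi.star_single, star_one, mulVec_add, mulVec_single_one, add_dotProduct,
    dotProduct_add, single_one_dotProduct, Complex.add_re, col_apply, hji]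
  ring

end

end Matrix

theorem Fin.one_add_neg_one_pow_val_add_val (b a : Fin 2) :
    1 + (-1 : ℝ) ^ ((b : ℕ) + a) = if a = b then 2 else 0 := by
  fin_cases a <;> fin_cases b <;> norm_num

section

variable {ι : Type*} [Fintype ι]

theorem prod_one_add_neg_one_pow_val_add_val (b : Fin 2) (x : ι → Fin 2) :
    ∏ i, (1 + (-1 : ℝ) ^ ((b : ℕ) + x i)) = if x = fun _ => b then 2 ^ Fintype.card ι else 0 := by
  simp only [Fin.one_add_neg_one_pow_val_add_val, Fintype.prod_ite_zero, Finset.prod_const,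
    Finset.card_univ, funext_iff]

theorem sum_prod_one_add_neg_one_pow_mul_re_apply_self [DecidableEq ι] (b : Fin 2)
    (ρ : Matrix (ι → Fin 2) (ι → Fin 2) ℂ) :
    ∑ x, (∏ i, (1 + (-1 : ℝ) ^ ((b : ℕ) + x i))) * (ρ x x).re =
      2 ^ Fintype.card ι * (ρ (fun _ => b) (fun _ => b)).re := by
  simp only [prod_one_add_neg_one_pow_val_add_val, ite_mul, zero_mul, Finset.sum_ite_eq',
    Finset.mem_univ, if_true]

end

section

variable {ρ : Matrix (Fin 3 → Fin 2) (Fin 3 → Fin 2) ℂ}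

theorem one_add_zExp_add_zzExp_add_zzzExp (htr : ρ.trace = 1) :
    1 + 3 * ((zExp ρ 0 + zExp ρ 1 + zExp ρ 2) / 3) +
        3 * ((zzExp ρ 0 1 + zzExp ρ 0 2 + zzExp ρ 1 2) / 3) + zzzExp ρ =
      8 * (ρ (fun _ => 0) (fun _ => 0)).re := by
  have h := sum_prod_one_add_neg_one_pow_mul_re_apply_self 0 ρ
  rw [Fintype.card_fin, Fin.val_zero] at h
  rw [mul_div_cancel₀ _ three_ne_zero, mul_div_cancel₀ _ three_ne_zero,
    ← sum_re_apply_self_eq_one htr, show (8 : ℝ) = 2 ^ 3 by norm_num, ← h]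
  simp only [zExp, zzExp, zzzExp, ← Finset.sum_add_distrib, Fin.prod_univ_three]
  exact Finset.sum_congr rfl fun x _ => by ring

theorem one_sub_zExp_add_zzExp_sub_zzzExp (htr : ρ.trace = 1) :
    1 - 3 * ((zExp ρ 0 + zExp ρ 1 + zExp ρ 2) / 3) +
        3 * ((zzExp ρ 0 1 + zzExp ρ 0 2 + zzExp ρ 1 2) / 3) - zzzExp ρ =
      8 * (ρ (fun _ => 1) (fun _ => 1)).re := by
  have h := sum_prod_one_add_neg_one_pow_mul_re_apply_self 1 ρ
  rw [Fintype.card_fin, Fin.val_one] at h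
  rw [mul_div_cancel₀ _ three_ne_zero, mul_div_cancel₀ _ three_ne_zero,
    ← sum_re_apply_self_eq_one htr, show (8 : ℝ) = 2 ^ 3 by norm_num, ← h]
  simp only [zExp, zzExp, zzzExp, ← Finset.sum_add_distrib, ← Finset.sum_sub_distrib,
    Fin.prod_univ_three]
  exact Finset.sum_congr rfl fun x _ => by ring

end

theorem ghz3_eq_smul :
    ghz3 = ((1 / √2 : ℝ) : ℂ) • (Pi.single (fun _ => 0) 1 + Pi.single (fun _ => 1) 1) := by
  have hconst : ∀ x : Fin 3 → Fin 2,
      (∀ i j, x i = x j) ↔ x = (fun _ => 0) ∨ x = (fun _ => 1) := by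
    decide
  funext x
  rcases em (x = fun _ => 0) with rfl | h0
  · simp [ghz3, funext_iff]
  rcases em (x = fun _ => 1) with rfl | h1
  · simp [ghz3, funext_iff]
  simp [ghz3, hconst, h0, h1]

theorem re_star_ghz3_dotProduct_mulVec {A : Matrix (Fin 3 → Fin 2) (Fin 3 → Fin 2) ℂ}
    (hA : A.IsHermitian) :
    (star ghz3 ⬝ᵥ A *ᵥ ghz3).re =
      ((A (fun _ => 0) (fun _ => 0)).re + (A (fun _ => 1) (fun _ => 1)).re +
        2 * (A (fun _ => 0) (fun _ => 1)).re) / 2 := by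
  rw [ghz3_eq_smul, star_smul, mulVec_smul, smul_dotProduct, dotProduct_smul, smul_eq_mul,
    smul_eq_mul, Complex.star_def, Complex.conj_ofReal, ← mul_assoc, ← Complex.ofReal_mul,
    Complex.re_ofReal_mul, hA.re_dotProduct_mulVec_single_add_single, div_mul_div_comm, one_mul,
    Real.mul_self_sqrt zero_le_two]
  ring

/-- for any three-qubit density matrix `ρ`, with `z₁, z₂, z₃` the averaged
one-, two-, and three-body Pauli-Z correlations, the GHZ fidelity is bounded by
`(1/16)·(√(1 + 3z₁ + 3z₂ + z₃) + √(1 − 3z₁ + 3z₂ − z₃))²`. -/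
theorem ghz3_fidelity_le_sqrt_bound
    (ρ : Matrix (Fin 3 → Fin 2) (Fin 3 → Fin 2) ℂ)
    (hρ : ρ.PosSemidef) (htr : ρ.trace = 1) :
    (star ghz3 ⬝ᵥ ρ *ᵥ ghz3).re ≤
      (1 / 16) *
        (Real.sqrt (1 + 3 * ((zExp ρ 0 + zExp ρ 1 + zExp ρ 2) / 3) +
            3 * ((zzExp ρ 0 1 + zzExp ρ 0 2 + zzExp ρ 1 2) / 3) + zzzExp ρ) +
          Real.sqrt (1 - 3 * ((zExp ρ 0 + zExp ρ 1 + zExp ρ 2) / 3) +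
            3 * ((zzExp ρ 0 1 + zzExp ρ 0 2 + zzExp ρ 1 2) / 3) - zzzExp ρ)) ^ 2 := by
  rw [one_add_zExp_add_zzExp_add_zzzExp htr, one_sub_zExp_add_zzExp_sub_zzzExp htr,
    re_star_ghz3_dotProduct_mulVec hρ.1]
  set a := (ρ (fun _ => 0) (fun _ => 0)).re
  set b := (ρ (fun _ => 1) (fun _ => 1)).re
  have ha : 0 ≤ a := (RCLike.nonneg_iff.mp hρ.diag_nonneg).1
  have hb : 0 ≤ b := (RCLike.nonneg_iff.mp hρ.diag_nonneg).1
  calc (a + b + 2 * (ρ (fun _ => 0) (fun _ => 1)).re) / 2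
      ≤ (a + b + 2 * (√a * √b)) / 2 := by
        gcongr
        exact hρ.re_apply_le_sqrt_mul_sqrt _ _
    _ = 1 / 16 * (√(8 * a) + √(8 * b)) ^ 2 := by
        have h8 : (0 : ℝ) ≤ 8 := by norm_num
        rw [Real.sqrt_mul h8, Real.sqrt_mul h8]
        ring_nf
        rw [Real.sq_sqrt ha, Real.sq_sqrt hb, Real.sq_sqrt h8]
        ring
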